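/- Let f be a feasible tree solution with tree structure (T,L,U). Then the number Fea of feasible integer flows of the network satisfies Σ_{a∉T} u(C_a) ≤ Fea ≤ Π_{a∉T} (u_a + 1), where the sum and the product range over all non-tree arcs. -/

import Mathlib

open scoped Classical
noncomputable section

/-- A network: finite directed graph with arc set `A`, lower/upper capacities `l`, `u`,
node balances `b` and arc costs `c`. -/
structure Network (V : Type) [Fintype V] [DecidableEq V] where
  A : Finset (V × V)
  l : V × V → ℤ
  u : V × V → ℤ
  b : V → ℤ
  c : V × V → ℝ

variable {V : Type} [Fintype V] [DecidableEq V]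

namespace Network

/-- No anti-parallel arcs, and `0 ≤ l ≤ u` on every arc. -/
def Wellformed (N : Network V) : Prop :=
  (∀ a ∈ N.A, (a.2, a.1) ∉ N.A) ∧ ∀ a ∈ N.A, 0 ≤ N.l a ∧ N.l a ≤ N.u a

/-- A feasible integer flow: capacity constraints, vanishing outside `A`, flow balance. -/
def Feasible (N : Network V) (f : V × V → ℤ) : Prop :=
  (∀ a ∈ N.A, N.l a ≤ f a ∧ f a ≤ N.u a) ∧
  (∀ a, a ∉ N.A → f a = 0) ∧
  ∀ i : V, ((∑ a ∈ N.A.filter fun a => a.1 = i, f a)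
         - ∑ a ∈ N.A.filter fun a => a.2 = i, f a) = N.b i

/-- The cost of a flow. -/
def cost (N : Network V) (f : V × V → ℤ) : ℝ := ∑ a ∈ N.A, N.c a * (f a : ℝ)

/-- A flow is optimal if it is feasible of minimum cost. -/
def Optimal (N : Network V) (f : V × V → ℤ) : Prop :=
  N.Feasible f ∧ ∀ g, N.Feasible g → N.cost f ≤ N.cost g

/-- The arc set `A_f` of the residual graph `D_f`. -/
def resArcs (N : Network V) (f : V × V → ℤ) : Finset (V × V) :=
  N.A.filter (fun a => f a < N.u a) ∪ (N.A.filter fun a => N.l a < f a).image Prod.swap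

/-- Residual cost of a residual arc: `c_{ij}` on forward arcs, `-c_{ji}` on backward arcs. -/
def resCost (N : Network V) (a : V × V) : ℝ :=
  if a ∈ N.A then N.c a else -N.c (a.2, a.1)

/-- Residual capacity of a residual arc. -/
def resCap (N : Network V) (f : V × V → ℤ) (a : V × V) : ℤ :=
  if a ∈ N.A then N.u a - f a else f (a.2, a.1) - N.l (a.2, a.1)

/-- Reduced cost of an arc of `A` w.r.t. node potentials `y`. -/
def redCost (N : Network V) (y : V → ℝ) (a : V × V) : ℝ := N.c a + y a.1 - y a.2

/-- Residual reduced cost of a residual arc w.r.t. node potentials `y`. -/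
def resRedCost (N : Network V) (y : V → ℝ) (a : V × V) : ℝ := N.resCost a + y a.1 - y a.2

/-- `y` is an optimal node potential for `f`. -/
def OptPotential (N : Network V) (f : V × V → ℤ) (y : V → ℝ) : Prop :=
  ∀ a ∈ N.resArcs f, 0 ≤ N.resRedCost y a

end Network

/-- A (simple, directed) cycle: a nonempty duplicate-free list of at least two vertices,
traversed cyclically. -/
structure Cyc (V : Type) where
  verts : List V
  nodup : verts.Nodup
  two_le : 2 ≤ verts.length

/-- The arcs of a cycle: consecutive (cyclic) pairs of vertices. -/
def Cyc.arcs (C : Cyc V) : Finset (V × V) :=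
  (C.verts.zip (C.verts.rotate 1)).toFinset

/-- A cycle is proper if it contains no pair of anti-parallel arcs. -/
def Cyc.Proper (C : Cyc V) : Prop := ∀ a ∈ C.arcs, (a.2, a.1) ∉ C.arcs

/-- The incidence vector `χ(C)` of a cycle. -/
def Cyc.chi (C : Cyc V) : V × V → ℤ :=
  fun a => if a ∈ C.arcs then 1 else if (a.2, a.1) ∈ C.arcs then -1 else 0

namespace Network

/-- `C` is a directed cycle of the residual graph `D_f`. -/
def IsResCycle (N : Network V) (f : V × V → ℤ) (C : Cyc V) : Prop :=
  ∀ a ∈ C.arcs, a ∈ N.resArcs f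

/-- The cost `c(f,C)` of a cycle in the residual graph. -/
def cycCost (N : Network V) (C : Cyc V) : ℝ := ∑ a ∈ C.arcs, N.resCost a

end Network

/-- The consecutive (cyclic) pairs of a list of vertices. -/
def cyclePairs (vs : List V) : List (V × V) := vs.zip (vs.rotate 1)

/-- `C` is the edge set of a cycle of the underlying undirected graph of the digraph with
arc set `A`: the arcs of `A` whose underlying edges are the consecutive (cyclic) pairs of
a duplicate-free list of at least three vertices. -/
def IsUCycle (A C : Finset (V × V)) : Prop :=
  ∃ vs : List V, vs.Nodup ∧ 3 ≤ vs.length ∧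
    (∀ p ∈ cyclePairs vs, p ∈ A ∨ p.swap ∈ A) ∧
    C = A.filter fun a => a ∈ cyclePairs vs ∨ a.swap ∈ cyclePairs vs

/-- `T ⊆ A` is a spanning tree of the underlying undirected graph: it connects all
vertices and has `|V| - 1` edges. -/
def IsSpanningTree (A T : Finset (V × V)) : Prop :=
  T ⊆ A ∧ (∀ u v : V, Relation.ReflTransGen (fun x y => (x, y) ∈ T ∨ (y, x) ∈ T) u v) ∧
    T.card + 1 = Fintype.card V

/-- `C` is the unique (fundamental) cycle induced by the non-tree arc `a`: the cycle
consisting of `a` together with tree edges only. -/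
def IsFundCycle (A T : Finset (V × V)) (a : V × V) (C : Finset (V × V)) : Prop :=
  IsUCycle A C ∧ a ∈ C ∧ C \ {a} ⊆ T

namespace Network

/-- A tree solution: a feasible flow together with a spanning tree `T` and a partition
`A ∖ T = L ∪ U` such that `f = l` on `L` and `f = u` on `U`. -/
def IsTreeSolution (N : Network V) (f : V × V → ℤ) (T L U : Finset (V × V)) : Prop :=
  N.Feasible f ∧ IsSpanningTree N.A T ∧ L ∪ U = N.A \ T ∧ Disjoint L U ∧
    (∀ a ∈ L, f a = N.l a) ∧ ∀ a ∈ U, f a = N.u a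

end Network

/-- `vs` is a traversal (in the direction of `a`, starting with `a`) of the unique cycle
induced by the non-tree arc `a`: `a` together with the tree path from `a.2` to `a.1`. -/
def IsInducedCycleList (A T : Finset (V × V)) (a : V × V) (vs : List V) : Prop :=
  vs.Nodup ∧ (∃ rest, vs = a.1 :: a.2 :: rest) ∧
    ∀ p ∈ cyclePairs vs, p = a ∨ p ∈ T ∨ p.swap ∈ T

/-- The incidence vector of the cycle traversal `vs` (in traversal direction). -/
def chiList (vs : List V) : V × V → ℤ := fun e =>
  if e ∈ cyclePairs vs then 1 else if e.swap ∈ cyclePairs vs then -1 else 0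

/-- The incidence vector `χ(C_a)` of the induced cycle `C_a` (given by the traversal list
`vs` in the direction of `a`), oriented in the direction of `a` if `a ∈ L` and opposite to
`a` otherwise, and supported on the arc set `A` of the network. -/
def chiInd (N : Network V) (L : Finset (V × V)) (a : V × V) (vs : List V) : V × V → ℤ :=
  fun e => if e ∈ N.A then (if a ∈ L then chiList vs e else -chiList vs e) else 0

/-- The cost `c(C_a) = ∑_{e ∈ A} χ_e(C_a) c_e` of an induced cycle. -/
def indCycleCost (N : Network V) (L : Finset (V × V)) (a : V × V) (vs : List V) : ℝ :=
  ∑ e ∈ N.A, (chiInd N L a vs e : ℝ) * N.c e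

/-- The equivalent undirected cycle `C_D ⊆ A` of a directed cycle `C` of the residual
graph: the arcs of `A` traversed by `C` in either direction. -/
def Network.equivCycle (N : Network V) (C : Cyc V) : Finset (V × V) :=
  N.A.filter fun a => a ∈ C.arcs ∨ (a.2, a.1) ∈ C.arcs

/-- The free capacity `u(C_a)` of an induced cycle with incidence vector `χ`:
the minimum over the arcs `e` of the cycle of `u_e − f_e` if `χ_e = 1` and of `f_e`
if `χ_e = −1`. -/
def freeCap (N : Network V) (f : V × V → ℤ) (χ : V × V → ℤ) : ℤ :=
  sInf {x : ℤ | ∃ e ∈ N.A, χ e ≠ 0 ∧ x = if χ e = 1 then N.u e - f e else f e}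

/-!
Upper bound: two feasible flows that agree off the tree differ by a circulation supported on
the tree. Such a circulation vanishes: every tree arc `e` is a bridge, and summing the flow
balance over the vertices on one side of `e` leaves exactly the flow on `e`. So a feasible flow
is determined by its values on the non-tree arcs, and `0 ≤ g_a ≤ u_a` there.

Lower bound: `χ(C_a)` is a `{0, ±1}`-valued circulation, so `f + t χ(C_a)` is feasible for
`0 ≤ t ≤ u(C_a)`. Since `χ(C_a)` is `±1` on `a` and vanishes on every other non-tree arc, the
flows obtained for the non-tree arcs `a` and `1 ≤ t ≤ u(C_a)` are pairwise distinct.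
-/

section NetOutflow

variable {α : Type*} [DecidableEq α]

def netOutflow (A : Finset (α × α)) (i : α) : (α × α → ℤ) →ₗ[ℤ] ℤ where
  toFun d := (∑ a ∈ A.filter fun a => a.1 = i, d a) - ∑ a ∈ A.filter fun a => a.2 = i, d a
  map_add' d d' := by simp only [Pi.add_apply, Finset.sum_add_distrib]; ring
  map_smul' t d := by
    simp only [Pi.smul_apply, smul_eq_mul, ← Finset.mul_sum, RingHom.id_apply]; ring

theorem netOutflow_apply (A : Finset (α × α)) (i : α) (d : α × α → ℤ) :
    netOutflow A i d =
      (∑ a ∈ A.filter fun a => a.1 = i, d a) - ∑ a ∈ A.filter fun a => a.2 = i, d a := rfl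

theorem netOutflow_congr {A : Finset (α × α)} {d d' : α × α → ℤ} (h : ∀ a ∈ A, d a = d' a)
    (i : α) : netOutflow A i d = netOutflow A i d' := by
  simp only [netOutflow_apply]
  congr 1 <;> exact Finset.sum_congr rfl fun a ha => h a (Finset.mem_filter.mp ha).1

theorem sum_netOutflow (A : Finset (α × α)) (S : Finset α) (d : α × α → ℤ) :
    ∑ i ∈ S, netOutflow A i d =
      ∑ a ∈ A, d a * ((if a.1 ∈ S then 1 else 0) - if a.2 ∈ S then 1 else 0) := by
  have fiber (p : α × α → α) : ∑ i ∈ S, ∑ a ∈ A.filter (fun a => p a = i), d a =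
      ∑ a ∈ A, d a * if p a ∈ S then 1 else 0 := by
    simp only [Finset.sum_filter, mul_ite, mul_one, mul_zero]
    rw [Finset.sum_comm]
    exact Finset.sum_congr rfl fun a _ => Finset.sum_ite_eq S (p a) fun _ => d a
  simp only [netOutflow_apply, Finset.sum_sub_distrib, fiber, mul_sub]

theorem netOutflow_eq_of_subset {A T : Finset (α × α)} (hTA : T ⊆ A) {d : α × α → ℤ}
    (hd : ∀ a ∈ A, a ∉ T → d a = 0) (i : α) : netOutflow A i d = netOutflow T i d := by
  simp only [netOutflow_apply, Finset.sum_filter]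
  congr 1 <;> exact (Finset.sum_subset hTA fun a ha haT => by simp [hd a ha haT]).symm

theorem netOutflow_single (A : Finset (α × α)) (i : α) (p : α × α) :
    netOutflow A i (Pi.single p 1) =
      if p ∈ A then (if p.1 = i then 1 else 0) - if p.2 = i then 1 else 0 else 0 := by
  simp only [netOutflow_apply, Finset.sum_pi_single', Finset.mem_filter]
  split_ifs <;> simp_all

theorem netOutflow_single_sub_single_swap {A : Finset (α × α)} (hA : ∀ a ∈ A, a.swap ∉ A)
    {p : α × α} (hp : p ∈ A ∨ p.swap ∈ A) (i : α) :
    netOutflow A i (Pi.single p 1 - Pi.single p.swap 1) =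
      (if p.1 = i then 1 else 0) - if p.2 = i then 1 else 0 := by
  rw [map_sub, netOutflow_single, netOutflow_single]
  rcases hp with hp | hp
  · simp [hp, hA p hp]
  · have : p ∉ A := fun h => hA p h hp
    simp only [this, hp, if_true, if_false, Prod.fst_swap, Prod.snd_swap]
    ring

end NetOutflow

section ArcGraph

variable {α : Type*}

def arcGraph (T : Finset (α × α)) : SimpleGraph α := SimpleGraph.fromRel fun x y => (x, y) ∈ T

theorem arcGraph_adj {T : Finset (α × α)} {x y : α} :
    (arcGraph T).Adj x y ↔ x ≠ y ∧ ((x, y) ∈ T ∨ (y, x) ∈ T) :=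
  SimpleGraph.fromRel_adj _ x y

theorem fst_ne_snd_of_swap_notMem {T : Finset (α × α)} (hT : ∀ a ∈ T, a.swap ∉ T) {a : α × α}
    (ha : a ∈ T) : a.1 ≠ a.2 := fun h => hT a ha (by rwa [show a.swap = a from Prod.ext h.symm h])

theorem edgeSet_arcGraph {T : Finset (α × α)} (hT : ∀ a ∈ T, a.swap ∉ T) :
    (arcGraph T).edgeSet = (fun a : α × α => s(a.1, a.2)) '' (T : Set (α × α)) := by
  refine Set.ext (Sym2.ind fun x y => ?_)
  simp only [SimpleGraph.mem_edgeSet, arcGraph_adj, Set.mem_image, Finset.mem_coe, Sym2.eq_iff]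
  constructor
  · rintro ⟨-, h | h⟩
    exacts [⟨_, h, Or.inl ⟨rfl, rfl⟩⟩, ⟨_, h, Or.inr ⟨rfl, rfl⟩⟩]
  · rintro ⟨a, ha, ⟨rfl, rfl⟩ | ⟨rfl, rfl⟩⟩
    exacts [⟨fst_ne_snd_of_swap_notMem hT ha, Or.inl ha⟩,
      ⟨(fst_ne_snd_of_swap_notMem hT ha).symm, Or.inr ha⟩]

theorem card_edgeSet_arcGraph {T : Finset (α × α)} (hT : ∀ a ∈ T, a.swap ∉ T) :
    Nat.card (arcGraph T).edgeSet = T.card := by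
  rw [edgeSet_arcGraph hT, Nat.card_coe_set_eq, Set.InjOn.ncard_image, Set.ncard_coe_finset]
  intro a ha b hb hab
  rcases Sym2.mk_eq_mk_iff.mp hab with h | h
  · exact h
  · exact absurd (h ▸ hb : a.swap ∈ T) (hT a ha)

theorem reachable_arcGraph_of_reflTransGen {T : Finset (α × α)} {u v : α}
    (h : Relation.ReflTransGen (fun x y => (x, y) ∈ T ∨ (y, x) ∈ T) u v) :
    (arcGraph T).Reachable u v := by
  rw [SimpleGraph.reachable_iff_reflTransGen, ← Relation.reflTransGen_reflGen]
  refine Relation.ReflTransGen.mono (fun x y hxy => ?_) u v h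
  by_cases hxy' : x = y
  · exact hxy' ▸ Relation.ReflGen.refl
  · exact Relation.ReflGen.single (arcGraph_adj.mpr ⟨hxy', hxy⟩)

theorem eq_zero_of_isAcyclic_arcGraph [Fintype α] [DecidableEq α] {T : Finset (α × α)}
    (hT : ∀ a ∈ T, a.swap ∉ T) (hacyc : (arcGraph T).IsAcyclic) {d : α × α → ℤ}
    (hd : ∀ i, netOutflow T i d = 0) {e : α × α} (he : e ∈ T) : d e = 0 := by
  set H := (arcGraph T).deleteEdges {s(e.1, e.2)}
  have hbridge : ¬ H.Reachable e.1 e.2 := SimpleGraph.isAcyclic_iff_forall_adj_isBridge.mp hacyc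
    (arcGraph_adj.mpr ⟨fst_ne_snd_of_swap_notMem hT he, Or.inl he⟩)
  set S := Finset.univ.filter (H.Reachable e.1)
  have hside : ∀ a ∈ T, a ≠ e → (a.1 ∈ S ↔ a.2 ∈ S) := by
    intro a ha hae
    have hadj : H.Adj a.1 a.2 := by
      refine SimpleGraph.deleteEdges_adj.mpr ⟨arcGraph_adj.mpr
        ⟨fst_ne_snd_of_swap_notMem hT ha, Or.inl ha⟩, fun h => ?_⟩
      rcases Sym2.eq_iff.mp (Set.mem_singleton_iff.mp h) with ⟨h1, h2⟩ | ⟨h1, h2⟩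
      · exact hae (Prod.ext h1 h2)
      · exact hT e he (by rw [show e.swap = a from Prod.ext h1.symm h2.symm]; exact ha)
    simp only [S, Finset.mem_filter, Finset.mem_univ, true_and]
    exact ⟨fun h => h.trans hadj.reachable, fun h => h.trans hadj.symm.reachable⟩
  calc d e = ∑ a ∈ T, d a * ((if a.1 ∈ S then 1 else 0) - if a.2 ∈ S then 1 else 0) := by
        rw [Finset.sum_eq_single_of_mem e he fun a ha hae => by simp [hside a ha hae]]
        simp [S, hbridge]
    _ = 0 := by rw [← sum_netOutflow]; exact Finset.sum_eq_zero fun i _ => hd i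

end ArcGraph

theorem IsSpanningTree.isTree_arcGraph {α : Type} [Fintype α] {A T : Finset (α × α)}
    (hA : ∀ a ∈ A, a.swap ∉ A) (hT : IsSpanningTree A T) : (arcGraph T).IsTree := by
  obtain ⟨hTA, hconn, hcard⟩ := hT
  have : Nonempty α := Fintype.card_pos_iff.mp (by omega)
  refine SimpleGraph.isTree_iff_connected_and_card.mpr ⟨?_, ?_⟩
  · exact SimpleGraph.Connected.mk fun u v => reachable_arcGraph_of_reflTransGen (hconn u v)
  · rw [card_edgeSet_arcGraph fun a ha => hA a (hTA ha) ∘ (hTA ·), Nat.card_eq_fintype_card, hcard]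

section CyclePairs

variable {α : Type}

theorem length_cyclePairs (vs : List α) : (cyclePairs vs).length = vs.length := by
  simp [cyclePairs]

theorem map_fst_cyclePairs (vs : List α) : (cyclePairs vs).map Prod.fst = vs :=
  List.map_fst_zip (by simp)

theorem map_snd_cyclePairs (vs : List α) : (cyclePairs vs).map Prod.snd = vs.rotate 1 :=
  List.map_snd_zip (by simp)

theorem nodup_cyclePairs {vs : List α} (hnd : vs.Nodup) : (cyclePairs vs).Nodup :=
  List.Nodup.of_map Prod.fst (by rwa [map_fst_cyclePairs])

theorem mk_mem_cyclePairs_cons (x y : α) (rest : List α) :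
    (x, y) ∈ cyclePairs (x :: y :: rest) := by
  simp [cyclePairs, List.rotate_cons_succ]

theorem getElem_cyclePairs (vs : List α) (j : ℕ) (hj : j < (cyclePairs vs).length) :
    (cyclePairs vs)[j] = (vs[j]'(by simpa [length_cyclePairs] using hj),
      vs[(j + 1) % vs.length]'(Nat.mod_lt _ (by simp [length_cyclePairs] at hj; omega))) := by
  simp [cyclePairs, List.getElem_rotate]

theorem mem_cyclePairs_iff {vs : List α} {p : α × α} :
    p ∈ cyclePairs vs ↔ ∃ (j : ℕ) (hj : j < vs.length),
      p = (vs[j], vs[(j + 1) % vs.length]'(Nat.mod_lt _ (by omega))) := by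
  rw [List.mem_iff_getElem]
  constructor
  · rintro ⟨j, hj, rfl⟩
    exact ⟨j, by simpa [length_cyclePairs] using hj, getElem_cyclePairs vs j hj⟩
  · rintro ⟨j, hj, rfl⟩
    exact ⟨j, by simpa [length_cyclePairs] using hj, getElem_cyclePairs vs j _⟩

theorem swap_notMem_cyclePairs {vs : List α} (hnd : vs.Nodup) (h3 : 3 ≤ vs.length)
    {p : α × α} (hp : p ∈ cyclePairs vs) : p.swap ∉ cyclePairs vs := by
  intro hq
  obtain ⟨j, hj, rfl⟩ := mem_cyclePairs_iff.mp hp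
  obtain ⟨k, hk, hjk⟩ := mem_cyclePairs_iff.mp hq
  simp only [Prod.swap_prod_mk, Prod.mk.injEq] at hjk
  have e1 := hnd.getElem_inj_iff.mp hjk.1
  have e2 := hnd.getElem_inj_iff.mp hjk.2
  have succ_mod : ∀ m < vs.length, (m + 1) % vs.length = if m + 1 < vs.length then m + 1 else 0 :=
    fun m hm => by
      split_ifs with h
      · exact Nat.mod_eq_of_lt h
      · rw [show m + 1 = vs.length by omega, Nat.mod_self]
  rw [succ_mod j hj] at e1
  rw [succ_mod k hk] at e2
  split_ifs at e1 e2 <;> omega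

end CyclePairs

section ChiList

variable {α : Type} [DecidableEq α]

theorem chiList_eq_sum {vs : List α} (hnd : vs.Nodup) (h3 : 3 ≤ vs.length) :
    chiList vs = ∑ p ∈ (cyclePairs vs).toFinset, (Pi.single p 1 - Pi.single p.swap 1) := by
  funext e
  simp only [Finset.sum_apply, Pi.sub_apply, Finset.sum_sub_distrib, Pi.single_apply, chiList,
    ← Prod.swap_eq_iff_eq_swap, Finset.sum_ite_eq, List.mem_toFinset]
  have := swap_notMem_cyclePairs hnd h3 (p := e)
  split_ifs <;> simp_all

theorem netOutflow_chiList {A : Finset (α × α)} (hA : ∀ a ∈ A, a.swap ∉ A) {vs : List α}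
    (hnd : vs.Nodup) (h3 : 3 ≤ vs.length) (hcov : ∀ p ∈ cyclePairs vs, p ∈ A ∨ p.swap ∈ A)
    (i : α) : netOutflow A i (chiList vs) = 0 := by
  rw [chiList_eq_sum hnd h3, map_sum,
    Finset.sum_congr rfl fun p hp => netOutflow_single_sub_single_swap hA
      (hcov p (List.mem_toFinset.mp hp)) i,
    Finset.sum_sub_distrib, List.sum_toFinset _ (nodup_cyclePairs hnd),
    List.sum_toFinset _ (nodup_cyclePairs hnd)]
  have hfst := congrArg (List.map fun v => if v = i then (1 : ℤ) else 0) (map_fst_cyclePairs vs)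
  have hsnd := congrArg (List.map fun v => if v = i then (1 : ℤ) else 0) (map_snd_cyclePairs vs)
  simp only [List.map_map] at hfst hsnd
  rw [Function.comp_def] at hfst hsnd
  rw [hfst, hsnd, ((List.rotate_perm vs 1).map _).sum_eq, sub_self]

end ChiList

section InducedCycle

variable {α : Type} {A T : Finset (α × α)} {a : α × α} {vs : List α}

theorem IsInducedCycleList.mem_cyclePairs (h : IsInducedCycleList A T a vs) :
    a ∈ cyclePairs vs := by
  obtain ⟨rest, rfl⟩ := h.2.1
  exact mk_mem_cyclePairs_cons a.1 a.2 rest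

theorem IsInducedCycleList.mem_or_swap_mem (hTA : T ⊆ A) (ha : a ∈ A)
    (h : IsInducedCycleList A T a vs) : ∀ p ∈ cyclePairs vs, p ∈ A ∨ p.swap ∈ A := by
  intro p hp
  rcases h.2.2 p hp with rfl | hpT | hpT
  exacts [Or.inl ha, Or.inl (hTA hpT), Or.inr (hTA hpT)]

theorem IsInducedCycleList.three_le_length (hA : ∀ a ∈ A, a.swap ∉ A) (hTA : T ⊆ A)
    (ha : a ∈ A) (haT : a ∉ T) (h : IsInducedCycleList A T a vs) : 3 ≤ vs.length := by
  obtain ⟨hnd, ⟨rest, rfl⟩, hcl⟩ := h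
  rcases rest with _ | ⟨z, rest⟩
  · rcases hcl a.swap (by simp [cyclePairs, List.rotate_cons_succ, Prod.swap]) with h | h | h
    · exact absurd (congrArg Prod.fst h) (by simpa [eq_comm] using hnd)
    · exact absurd (hTA h) (hA a ha)
    · exact absurd (by simpa using h) haT
  · simp

theorem IsInducedCycleList.chiList_eq_zero [DecidableEq α] (hA : ∀ a ∈ A, a.swap ∉ A)
    (hTA : T ⊆ A) (ha : a ∈ A) {b : α × α} (hb : b ∈ A) (hbT : b ∉ T) (hba : b ≠ a)
    (h : IsInducedCycleList A T a vs) : chiList vs b = 0 := by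
  have hb₁ : b ∉ cyclePairs vs := fun hb' => by
    rcases h.2.2 b hb' with h' | h' | h'
    exacts [hba h', hbT h', hA b hb (hTA h')]
  have hb₂ : b.swap ∉ cyclePairs vs := fun hb' => by
    rcases h.2.2 b.swap hb' with h' | h' | h'
    exacts [hA b hb (h' ▸ ha), hA b hb (hTA h'), hbT (by simpa using h')]
  simp [chiList, hb₁, hb₂]

end InducedCycle

section Counting

variable {α : Type*}

theorem sum_le_ncard_of_add_smul_mem {F : Set (α → ℤ)} (hF : F.Finite) {s : Finset α}
    (f : α → ℤ) (χ : α → α → ℤ) (c : α → ℤ) (hdiag : ∀ a ∈ s, χ a a ≠ 0)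
    (hoff : ∀ a ∈ s, ∀ b ∈ s, b ≠ a → χ a b = 0)
    (hmem : ∀ a ∈ s, ∀ t, 1 ≤ t → t ≤ c a → f + t • χ a ∈ F) :
    ∑ a ∈ s, c a ≤ F.ncard := by
  set P := s.sigma fun a => Finset.Icc 1 (c a)
  have hmaps : ∀ p ∈ (P : Set ((_ : α) × ℤ)), f + p.2 • χ p.1 ∈ F := fun p hp => by
    obtain ⟨hp₁, hp₂⟩ := Finset.mem_sigma.mp hp
    exact hmem p.1 hp₁ p.2 (Finset.mem_Icc.mp hp₂).1 (Finset.mem_Icc.mp hp₂).2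
  have hinj : Set.InjOn (fun p : (_ : α) × ℤ => f + p.2 • χ p.1) P := by
    rintro ⟨a, t⟩ hp ⟨b, t'⟩ hq hpq
    obtain ⟨ha, ht⟩ := Finset.mem_sigma.mp hp
    obtain ⟨hb, ht'⟩ := Finset.mem_sigma.mp hq
    have hat : t * χ a a = t' * χ b a := by simpa using congrFun hpq a
    obtain rfl : a = b := by
      by_contra hab
      rw [hoff b hb a ha hab, mul_zero] at hat
      exact hdiag a ha ((mul_eq_zero.mp hat).resolve_left (by simp at ht; omega))
    rw [mul_right_cancel₀ (hdiag a ha) hat]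
  calc ∑ a ∈ s, c a ≤ ∑ a ∈ s, ((Finset.Icc 1 (c a)).card : ℤ) :=
        Finset.sum_le_sum fun a _ => by
          rw [Int.card_Icc, add_sub_cancel_right]; exact Int.self_le_toNat _
    _ = P.card := by rw [Finset.card_sigma, Nat.cast_sum]
    _ ≤ F.ncard := by
        rw [← Set.ncard_coe_finset]
        exact_mod_cast Set.ncard_le_ncard_of_injOn _ hmaps hinj hF

theorem ncard_le_prod_of_determined_on {F : Set (α → ℤ)} {s : Finset α} {u : α → ℤ}
    (hu : ∀ a ∈ s, 0 ≤ u a) (hbound : ∀ g ∈ F, ∀ a ∈ s, 0 ≤ g a ∧ g a ≤ u a)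
    (hdet : ∀ g ∈ F, ∀ g' ∈ F, (∀ a ∈ s, g a = g' a) → g = g') :
    (F.ncard : ℤ) ≤ ∏ a ∈ s, (u a + 1) := by
  classical
  set P := s.pi fun a => Finset.Icc 0 (u a)
  have hmaps : ∀ g ∈ F, (fun a (_ : a ∈ s) => g a) ∈ (P : Set _) := fun g hg =>
    Finset.mem_pi.mpr fun a ha => Finset.mem_Icc.mpr (hbound g hg a ha)
  have hinj : Set.InjOn (fun g (a : α) (_ : a ∈ s) => g a) F := fun g hg g' hg' h =>
    hdet g hg g' hg' fun a ha => congrFun (congrFun h a) ha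
  calc (F.ncard : ℤ) ≤ P.card := by
        rw [← Set.ncard_coe_finset]
        exact_mod_cast Set.ncard_le_ncard_of_injOn _ hmaps hinj (Finset.finite_toSet P)
    _ = ∏ a ∈ s, (u a + 1) := by
        rw [Finset.card_pi, Nat.cast_prod]
        exact Finset.prod_congr rfl fun a ha => by
          rw [Int.card_Icc, sub_zero, Int.toNat_of_nonneg (by linarith [hu a ha])]

end Counting

theorem freeCap_le {N : Network V} {f χ : V × V → ℤ} {e : V × V} (he : e ∈ N.A) (hχ : χ e ≠ 0) :
    freeCap N f χ ≤ if χ e = 1 then N.u e - f e else f e := by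
  refine csInf_le (Set.Finite.bddBelow ?_) ⟨e, he, hχ, rfl⟩
  refine (N.A.image fun e => if χ e = 1 then N.u e - f e else f e).finite_toSet.subset ?_
  rintro x ⟨e, he, -, rfl⟩
  exact Finset.mem_image_of_mem _ he

namespace Network

variable {N : Network V}

theorem Feasible.netOutflow_eq {f : V × V → ℤ} (hf : N.Feasible f) (i : V) :
    netOutflow N.A i f = N.b i :=
  hf.2.2 i

theorem finite_setOf_feasible (N : Network V) : {g | N.Feasible g}.Finite :=
  (Set.Finite.pi' fun a => (Set.finite_Icc (N.l a) (N.u a)).insert 0).subset fun g hg a => by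
    by_cases ha : a ∈ N.A
    · exact Set.mem_insert_of_mem _ (hg.1 a ha)
    · rw [hg.2.1 a ha]; exact Set.mem_insert 0 _

theorem Feasible.eq_of_eqOn_sdiff (hA : ∀ a ∈ N.A, a.swap ∉ N.A) {T : Finset (V × V)}
    (hT : IsSpanningTree N.A T) {g g' : V × V → ℤ} (hg : N.Feasible g) (hg' : N.Feasible g')
    (h : ∀ a ∈ N.A \ T, g a = g' a) : g = g' := by
  have hsub : ∀ a ∈ N.A, a ∉ T → (g - g') a = 0 := fun a ha haT =>
    sub_eq_zero.mpr (h a (Finset.mem_sdiff.mpr ⟨ha, haT⟩))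
  have hcirc : ∀ i, netOutflow T i (g - g') = 0 := fun i => by
    rw [← netOutflow_eq_of_subset hT.1 hsub, map_sub, hg.netOutflow_eq, hg'.netOutflow_eq,
      sub_self]
  funext e
  by_cases heA : e ∈ N.A
  · by_cases heT : e ∈ T
    · exact sub_eq_zero.mp <| eq_zero_of_isAcyclic_arcGraph (fun a ha => hA a (hT.1 ha) ∘ (hT.1 ·))
        (hT.isTree_arcGraph hA).isAcyclic hcirc heT
    · exact h e (Finset.mem_sdiff.mpr ⟨heA, heT⟩)
  · rw [hg.2.1 e heA, hg'.2.1 e heA]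

theorem Feasible.add_smul (hl : ∀ a ∈ N.A, N.l a = 0) {f χ : V × V → ℤ} (hf : N.Feasible f)
    (hχA : ∀ e ∉ N.A, χ e = 0) (hχ : ∀ e, χ e = 1 ∨ χ e = 0 ∨ χ e = -1)
    (hcirc : ∀ i, netOutflow N.A i χ = 0) {t : ℤ} (ht₀ : 0 ≤ t) (ht : t ≤ freeCap N f χ) :
    N.Feasible (f + t • χ) := by
  refine ⟨fun e he => ?_, fun e he => by simp [hf.2.1 e he, hχA e he], fun i => ?_⟩
  · have hfe := hf.1 e he
    have hcap := fun h => ht.trans (freeCap_le (f := f) he h)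
    simp only [hl e he, Pi.add_apply, Pi.smul_apply, smul_eq_mul] at hfe ⊢
    rcases hχ e with h | h | h <;> simp only [h] at hcap ⊢ <;> norm_num at hcap <;>
      constructor <;> linarith
  · change netOutflow N.A i (f + t • χ) = N.b i
    rw [map_add, map_smul, hcirc, hf.netOutflow_eq, smul_zero, add_zero]

end Network

section ChiInd

variable {N : Network V} {T L : Finset (V × V)} {a : V × V} {vs : List V}

theorem chiInd_of_notMem {e : V × V} (he : e ∉ N.A) : chiInd N L a vs e = 0 :=
  if_neg he

theorem chiInd_eq_or (e : V × V) :
    chiInd N L a vs e = 1 ∨ chiInd N L a vs e = 0 ∨ chiInd N L a vs e = -1 := by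
  unfold chiInd chiList
  split_ifs <;> simp

theorem netOutflow_chiInd (hA : ∀ a ∈ N.A, a.swap ∉ N.A) (hTA : T ⊆ N.A) (ha : a ∈ N.A)
    (haT : a ∉ T) (h : IsInducedCycleList N.A T a vs) (i : V) :
    netOutflow N.A i (chiInd N L a vs) = 0 := by
  have hχ : ∀ e ∈ N.A, chiInd N L a vs e = ((if a ∈ L then 1 else -1) • chiList vs) e :=
    fun e he => by simp only [chiInd, if_pos he, Pi.smul_apply, smul_eq_mul]; split_ifs <;> simp
  rw [netOutflow_congr hχ, map_smul, netOutflow_chiList hA h.1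
    (h.three_le_length hA hTA ha haT) (h.mem_or_swap_mem hTA ha), smul_zero]

theorem chiInd_self_ne_zero (ha : a ∈ N.A) (h : IsInducedCycleList N.A T a vs) :
    chiInd N L a vs a ≠ 0 := by
  simp only [chiInd, chiList, if_pos ha, if_pos h.mem_cyclePairs]
  split_ifs <;> simp

theorem chiInd_eq_zero (hA : ∀ a ∈ N.A, a.swap ∉ N.A) (hTA : T ⊆ N.A) (ha : a ∈ N.A)
    {b : V × V} (hb : b ∈ N.A) (hbT : b ∉ T) (hba : b ≠ a) (h : IsInducedCycleList N.A T a vs) :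
    chiInd N L a vs b = 0 := by
  simp [chiInd, h.chiList_eq_zero hA hTA ha hb hbT hba]

end ChiInd

/-- Bounds on the number `Fea` of feasible integer flows for a feasible tree solution `f`
with tree structure `(T,L,U)`:
`∑_{a ∉ T} u(C_a) ≤ Fea ≤ ∏_{a ∉ T} (u_a + 1)`. -/
theorem card_feasible_bounds (N : Network V) (hN : N.Wellformed)
    (hl : ∀ a ∈ N.A, N.l a = 0)
    (f : V × V → ℤ) (T L U : Finset (V × V)) (hts : N.IsTreeSolution f T L U)
    (vsf : V × V → List V)
    (hvs : ∀ a ∈ N.A \ T, IsInducedCycleList N.A T a (vsf a)) :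
    (∑ a ∈ N.A \ T, freeCap N f (chiInd N L a (vsf a))) ≤
        ({g : V × V → ℤ | N.Feasible g}.ncard : ℤ) ∧
      ({g : V × V → ℤ | N.Feasible g}.ncard : ℤ) ≤ ∏ a ∈ N.A \ T, (N.u a + 1) := by
  obtain ⟨hf, hT, -⟩ := hts
  have hA : ∀ a ∈ N.A, a.swap ∉ N.A := hN.1
  constructor
  · refine sum_le_ncard_of_add_smul_mem N.finite_setOf_feasible f (fun a => chiInd N L a (vsf a))
      _ (fun a ha => ?_) (fun a ha b hb hba => ?_) (fun a ha t ht₁ ht => ?_)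
    all_goals obtain ⟨haA, haT⟩ := Finset.mem_sdiff.mp ha
    · exact chiInd_self_ne_zero haA (hvs a ha)
    · obtain ⟨hbA, hbT⟩ := Finset.mem_sdiff.mp hb
      exact chiInd_eq_zero hA hT.1 haA hbA hbT hba (hvs a ha)
    · exact hf.add_smul hl (fun _ => chiInd_of_notMem) chiInd_eq_or
        (netOutflow_chiInd hA hT.1 haA haT (hvs a ha)) (by omega) ht
  · refine ncard_le_prod_of_determined_on (fun a ha => ?_) (fun g hg a ha => ?_)
      fun g hg g' hg' => hg.eq_of_eqOn_sdiff hA hT hg'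
    all_goals obtain ⟨haA, -⟩ := Finset.mem_sdiff.mp ha
    · exact (hN.2 a haA).1.trans (hN.2 a haA).2
    · exact hl a haA ▸ hg.1 a haA
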